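/- For w_0 > 1 and n ≥ 2, the quantity T_n′′(w_0)(1 + T_n(w_0))/T_n′(w_0)² is strictly less than 1; equivalently, R_{n+1}′′′(0) < 1, so the error constant C_{n+1} = (1 − R_{n+1}′′′(0))/6 of the monotonic stability polynomial is strictly positive. -/

import Mathlib

open Real

/-- Chebyshev polynomial of the first kind, as a real function. -/
noncomputable def chebT : ℕ → ℝ → ℝ
  | 0, _ => 1
  | 1, x => x
  | (n+2), x => 2 * x * chebT (n+1) x - chebT n x

/-!
Write `w₀ = cosh t` with `t > 0`. Multiplying by `w₀² - 1 = sinh² t`, the Chebyshev equation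
`(x² - 1) T'' = n² T - x T'` and the identity `(x² - 1) T'² = n² (T² - 1)` reduce the claim to
`n² < w₀ T'(w₀)`, i.e. `n sinh t < cosh t · sinh (n t)`, which follows from the superadditivity
of `sinh` on `[0, ∞)`.
-/

open Polynomial Polynomial.Chebyshev

theorem chebT_eq_eval : ∀ n : ℕ, chebT n = fun x => (T ℝ n).eval x
  | 0 => by ext; simp [chebT]
  | 1 => by ext; simp [chebT]
  | n + 2 => by
    ext x
    rw [chebT, chebT_eq_eval (n + 1), chebT_eq_eval n]
    push_cast
    simp [T_add_two]

theorem deriv_chebT (n : ℕ) : deriv (chebT n) = fun x => (derivative (T ℝ n)).eval x := by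
  ext x
  rw [chebT_eq_eval, Polynomial.deriv]

theorem deriv_deriv_chebT (n : ℕ) :
    deriv (deriv (chebT n)) = fun x => (derivative^[2] (T ℝ n)).eval x := by
  ext x
  rw [deriv_chebT, Polynomial.deriv, Function.iterate_succ_apply', Function.iterate_one]

theorem chebT_cosh (n : ℕ) (t : ℝ) : chebT n (cosh t) = cosh (n * t) := by
  simp [chebT_eq_eval]

theorem deriv_chebT_cosh_mul_sinh (n : ℕ) (t : ℝ) :
    deriv (chebT n) (cosh t) * sinh t = n * sinh (n * t) := by
  have hU := U_real_cosh t (n - 1)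
  rw [deriv_chebT, T_derivative_eq_U]
  simp only [eval_mul, eval_intCast, mul_assoc, hU]
  push_cast
  ring_nf

theorem sq_sub_one_mul_deriv_deriv_chebT (n : ℕ) (x : ℝ) :
    (x ^ 2 - 1) * deriv (deriv (chebT n)) x = n ^ 2 * chebT n x - x * deriv (chebT n) x := by
  have hode :=
    congr_arg (eval x) (one_sub_X_sq_mul_derivative_derivative_T_eq_poly_in_T (R := ℝ) n)
  simp only [eval_mul, eval_sub, eval_one, eval_pow, eval_X, eval_intCast] at hode
  rw [deriv_deriv_chebT, deriv_chebT, chebT_eq_eval]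
  push_cast at hode ⊢
  linear_combination -hode

theorem sq_sub_one_mul_deriv_chebT_sq (n : ℕ) {x : ℝ} (hx : 1 ≤ x) :
    (x ^ 2 - 1) * deriv (chebT n) x ^ 2 = n ^ 2 * (chebT n x ^ 2 - 1) := by
  obtain ⟨t, rfl⟩ : ∃ t, cosh t = x := ⟨arcosh x, cosh_arcosh hx⟩
  have h := deriv_chebT_cosh_mul_sinh n t
  rw [chebT_cosh, cosh_sq', cosh_sq']
  linear_combination (deriv (chebT n) (cosh t) * sinh t + n * sinh (n * t)) * h

theorem nat_mul_sinh_le_sinh_nat_mul (n : ℕ) {t : ℝ} (ht : 0 ≤ t) :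
    n * sinh t ≤ sinh (n * t) := by
  induction n with
  | zero => simp
  | succ m ih =>
    have hm : 0 ≤ sinh (m * t) := sinh_nonneg_iff.2 (by positivity)
    have ht' : 0 ≤ sinh t := sinh_nonneg_iff.2 ht
    rw [Nat.cast_succ, add_one_mul, add_one_mul, sinh_add]
    nlinarith [one_le_cosh t, one_le_cosh (m * t)]

theorem sq_lt_mul_deriv_chebT {n : ℕ} (hn : n ≠ 0) {x : ℝ} (hx : 1 < x) :
    (n : ℝ) ^ 2 < x * deriv (chebT n) x := by
  obtain ⟨t, ht, rfl⟩ : ∃ t, 0 < t ∧ cosh t = x := ⟨arcosh x, arcosh_pos hx, cosh_arcosh hx.le⟩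
  have hn' : (0 : ℝ) < n := by positivity
  have hsinh : 0 < sinh t := sinh_pos_iff.2 ht
  have hsinhn : 0 < sinh (n * t) := sinh_pos_iff.2 (by positivity)
  have hle := nat_mul_sinh_le_sinh_nat_mul n ht.le
  refine lt_of_mul_lt_mul_right ?_ hsinh.le
  calc (n : ℝ) ^ 2 * sinh t = n * (n * sinh t) := by ring
    _ ≤ n * sinh (n * t) := by gcongr
    _ < cosh t * (n * sinh (n * t)) := lt_mul_left (by positivity) hx
    _ = cosh t * deriv (chebT n) (cosh t) * sinh t := by
      rw [mul_assoc, deriv_chebT_cosh_mul_sinh]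

theorem one_le_chebT (n : ℕ) {x : ℝ} (hx : 1 ≤ x) : 1 ≤ chebT n x := by
  rw [chebT_eq_eval]
  exact one_le_eval_T_real n hx

theorem stmt16 (n : ℕ) (hn : 2 ≤ n) (w0 : ℝ) (hw0 : 1 < w0) :
    deriv (deriv (chebT n)) w0 * (1 + chebT n w0) / (deriv (chebT n) w0) ^ 2 < 1 := by
  have hkey := sq_lt_mul_deriv_chebT (by omega : n ≠ 0) hw0
  have hT := one_le_chebT n hw0.le
  have hD : 0 < deriv (chebT n) w0 :=
    pos_of_mul_pos_right ((sq_nonneg _).trans_lt hkey) (by linarith)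
  have hw0sq : 0 < w0 ^ 2 - 1 := by nlinarith
  rw [div_lt_one (by positivity)]
  refine lt_of_mul_lt_mul_left ?_ hw0sq.le
  calc (w0 ^ 2 - 1) * (deriv (deriv (chebT n)) w0 * (1 + chebT n w0))
      = (n ^ 2 * chebT n w0 - w0 * deriv (chebT n) w0) * (1 + chebT n w0) := by
        rw [← mul_assoc, sq_sub_one_mul_deriv_deriv_chebT]
    _ < n ^ 2 * (chebT n w0 ^ 2 - 1) := by
        linarith [mul_pos (by linarith : 0 < 1 + chebT n w0) (sub_pos.2 hkey)]
    _ = (w0 ^ 2 - 1) * deriv (chebT n) w0 ^ 2 := (sq_sub_one_mul_deriv_chebT_sq n hw0.le).symm
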